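/- Let G ⊆ ℝⁿ be a bounded domain, (b^{jk}) a symmetric C¹ matrix field on closure(G), ψ ∈ C²(closure(G)) satisfying Condition (B)(i) with constant μ₀ > 0, and let λ > 0, c₀ > 0, c₁ > 0. Define ℓ(t,x) = λ(ψ(x) − c₁t²), Ψ(x) = ℓ_{tt} + Σ_{j,k}(b^{jk}ℓ_{x_j})_{x_k} − c₀λ, and for each j,k, c^{jk} = (b^{jk}ℓ_t)_t + Σ_{j',k'}[2b^{jk'}(b^{j'k}ℓ_{x_{j'}})_{x_{k'}} − (b^{jk}b^{j'k'}ℓ_{x_{j'}})_{x_{k'}}] + Ψ b^{jk}. Then for every t ∈ ℝ, x ∈ closure(G) and ξ ∈ ℝⁿ, Σ_{j,k=1}^n c^{jk}(t,x) ξ_j ξ_k ≥ λ(μ₀ − 4c₁ − c₀) Σ_{j,k=1}^n b^{jk}(x) ξ_j ξ_k. -/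

import Mathlib

/-!
Since `ℓ_t = -2λc₁t` and `ℓ_x = λψ_x`, the time derivatives in `c^{jk}` contribute `-4λc₁ b^{jk}`.
Expanding `(b^{jk} b^{j'k'} ℓ_{x_{j'}})_{x_{k'}}` by the product rule, its part
`b^{jk} (b^{j'k'} ℓ_{x_{j'}})_{x_{k'}}` cancels the spatial part of `Ψ b^{jk}`, which leaves
`c^{jk} = λ M^{jk} - λ(4c₁ + c₀) b^{jk}` with `M` the matrix of Condition (B)(i).
Multiplying that condition by `λ > 0` gives the bound.
-/

open scoped BigOperators

/-- The partial derivative `∂f/∂x_j` at `x`. -/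
noncomputable def partialDeriv3 {n : ℕ} (f : EuclideanSpace ℝ (Fin n) → ℝ) (j : Fin n)
    (x : EuclideanSpace ℝ (Fin n)) : ℝ :=
  fderiv ℝ f x (EuclideanSpace.single j 1)

/-- The Carleman weight exponent `ℓ(t,x) = λ(ψ(x) − c₁ t²)`. -/
noncomputable def ell3 {n : ℕ} (lam c₁ : ℝ) (ψ : EuclideanSpace ℝ (Fin n) → ℝ)
    (t : ℝ) (x : EuclideanSpace ℝ (Fin n)) : ℝ :=
  lam * (ψ x - c₁ * t ^ 2)

/-- `ℓ_t(t,x)`. -/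
noncomputable def ellt3 {n : ℕ} (lam c₁ : ℝ) (ψ : EuclideanSpace ℝ (Fin n) → ℝ)
    (t : ℝ) (x : EuclideanSpace ℝ (Fin n)) : ℝ :=
  deriv (fun s => ell3 lam c₁ ψ s x) t

/-- `ℓ_{tt}(t,x)`. -/
noncomputable def elltt3 {n : ℕ} (lam c₁ : ℝ) (ψ : EuclideanSpace ℝ (Fin n) → ℝ)
    (t : ℝ) (x : EuclideanSpace ℝ (Fin n)) : ℝ :=
  deriv (fun s => ellt3 lam c₁ ψ s x) t

/-- `Ψ = ℓ_{tt} + Σ_{j,k} (b^{jk} ℓ_{x_j})_{x_k} − c₀ λ`. -/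
noncomputable def Psi3 {n : ℕ} (b : EuclideanSpace ℝ (Fin n) → Fin n → Fin n → ℝ)
    (ψ : EuclideanSpace ℝ (Fin n) → ℝ) (lam c₀ c₁ : ℝ)
    (t : ℝ) (x : EuclideanSpace ℝ (Fin n)) : ℝ :=
  elltt3 lam c₁ ψ t x
    + ∑ j, ∑ k, partialDeriv3 (fun y => b y j k * partialDeriv3 (ell3 lam c₁ ψ t) j y) k x
    - c₀ * lam

/-- `c^{jk} = (b^{jk}ℓ_t)_t + Σ_{j',k'}[2b^{jk'}(b^{j'k}ℓ_{x_{j'}})_{x_{k'}}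
  − (b^{jk}b^{j'k'}ℓ_{x_{j'}})_{x_{k'}}] + Ψ b^{jk}`. -/
noncomputable def cjk3 {n : ℕ} (b : EuclideanSpace ℝ (Fin n) → Fin n → Fin n → ℝ)
    (ψ : EuclideanSpace ℝ (Fin n) → ℝ) (lam c₀ c₁ : ℝ)
    (t : ℝ) (x : EuclideanSpace ℝ (Fin n)) (j k : Fin n) : ℝ :=
  deriv (fun s => b x j k * ellt3 lam c₁ ψ s x) t
    + ∑ j', ∑ k',
        (2 * b x j k' * partialDeriv3 (fun y => b y j' k * partialDeriv3 (ell3 lam c₁ ψ t) j' y) k' x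
          - partialDeriv3 (fun y => b y j k * b y j' k' * partialDeriv3 (ell3 lam c₁ ψ t) j' y) k' x)
    + Psi3 b ψ lam c₀ c₁ t x * b x j k

/-- Condition (B)(i): the pseudoconvexity inequality with constant `μ₀` on the set `S`. -/
def CondBi3 {n : ℕ} (b : EuclideanSpace ℝ (Fin n) → Fin n → Fin n → ℝ)
    (ψ : EuclideanSpace ℝ (Fin n) → ℝ) (μ₀ : ℝ) (S : Set (EuclideanSpace ℝ (Fin n))) : Prop :=
  ∀ x ∈ S, ∀ ξ : Fin n → ℝ,
    μ₀ * ∑ j, ∑ k, b x j k * ξ j * ξ k ≤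
      ∑ j, ∑ k, (∑ j', ∑ k',
        (2 * b x j k' * partialDeriv3 (fun y => b y j' k * partialDeriv3 ψ j' y) k' x
          - partialDeriv3 (fun y => b y j k) k' x * b x j' k' * partialDeriv3 ψ j' x))
        * ξ j * ξ k

section PartialDeriv

variable {n : ℕ}

lemma partialDeriv3_const_mul (c : ℝ) (f : EuclideanSpace ℝ (Fin n) → ℝ) (j : Fin n)
    (x : EuclideanSpace ℝ (Fin n)) :
    partialDeriv3 (fun y => c * f y) j x = c * partialDeriv3 f j x := by
  have h := congrArg (fun L => L x (EuclideanSpace.single j 1))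
    (fderiv_const_smul_field (𝕜 := ℝ) c (f := f))
  simpa only [partialDeriv3, Pi.smul_def, smul_eq_mul, smul_apply] using h

lemma partialDeriv3_mul {f g : EuclideanSpace ℝ (Fin n) → ℝ} {x : EuclideanSpace ℝ (Fin n)}
    (hf : DifferentiableAt ℝ f x) (hg : DifferentiableAt ℝ g x) (j : Fin n) :
    partialDeriv3 (fun y => f y * g y) j x
      = f x * partialDeriv3 g j x + partialDeriv3 f j x * g x := by
  simp only [partialDeriv3, fderiv_fun_mul hf hg, add_apply,
    smul_apply, smul_eq_mul]
  ring

lemma partialDeriv3_mul_mul {f g h : EuclideanSpace ℝ (Fin n) → ℝ}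
    {x : EuclideanSpace ℝ (Fin n)} (hf : DifferentiableAt ℝ f x)
    (hgh : DifferentiableAt ℝ (fun y => g y * h y) x) (j : Fin n) :
    partialDeriv3 (fun y => f y * g y * h y) j x
      = f x * partialDeriv3 (fun y => g y * h y) j x + partialDeriv3 f j x * g x * h x := by
  simp only [mul_assoc]
  exact partialDeriv3_mul hf hgh j

end PartialDeriv

section CarlemanWeight

variable {n : ℕ} (lam c₁ : ℝ) (ψ : EuclideanSpace ℝ (Fin n) → ℝ) (t : ℝ)
  (x : EuclideanSpace ℝ (Fin n))

lemma hasDerivAt_ell3 : HasDerivAt (fun s => ell3 lam c₁ ψ s x) (-(2 * lam * c₁) * t) t := by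
  have h := ((hasDerivAt_pow 2 t).const_mul c₁).const_sub (ψ x) |>.const_mul lam
  exact h.congr_deriv (by norm_num; ring)

lemma ellt3_eq : ellt3 lam c₁ ψ t x = -(2 * lam * c₁) * t :=
  (hasDerivAt_ell3 lam c₁ ψ t x).deriv

lemma deriv_const_mul_ellt3 (a : ℝ) :
    deriv (fun s => a * ellt3 lam c₁ ψ s x) t = -(2 * lam * c₁) * a := by
  simp [ellt3_eq, mul_comm]

lemma elltt3_eq : elltt3 lam c₁ ψ t x = -(2 * lam * c₁) := by
  simp only [elltt3, ellt3_eq]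
  simp

lemma partialDeriv3_ell3 (j : Fin n) :
    partialDeriv3 (ell3 lam c₁ ψ t) j = fun y => lam * partialDeriv3 ψ j y := by
  ext y
  have h : ell3 lam c₁ ψ t = fun z => lam * ψ z - lam * (c₁ * t ^ 2) := by
    ext z
    simp only [ell3]
    ring
  rw [h, partialDeriv3, fderiv_sub_const, ← partialDeriv3, partialDeriv3_const_mul]

lemma partialDeriv3_mul_partialDeriv3_ell3 (f : EuclideanSpace ℝ (Fin n) → ℝ) (j k : Fin n) :
    partialDeriv3 (fun y => f y * partialDeriv3 (ell3 lam c₁ ψ t) j y) k x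
      = lam * partialDeriv3 (fun y => f y * partialDeriv3 ψ j y) k x := by
  rw [← partialDeriv3_const_mul, partialDeriv3_ell3]
  simp only [mul_left_comm]

end CarlemanWeight

section Coefficients

variable {n : ℕ} (b : EuclideanSpace ℝ (Fin n) → Fin n → Fin n → ℝ)
  (ψ : EuclideanSpace ℝ (Fin n) → ℝ)

/-- The matrix whose quadratic form Condition (B)(i) bounds below by `μ₀ b`. -/
noncomputable def pseudoconvexityMatrix (x : EuclideanSpace ℝ (Fin n)) (j k : Fin n) : ℝ :=
  ∑ j', ∑ k',
    (2 * b x j k' * partialDeriv3 (fun y => b y j' k * partialDeriv3 ψ j' y) k' x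
      - partialDeriv3 (fun y => b y j k) k' x * b x j' k' * partialDeriv3 ψ j' x)

theorem cjk3_eq {lam c₀ c₁ t : ℝ} {x : EuclideanSpace ℝ (Fin n)}
    (hb : ∀ j k, DifferentiableAt ℝ (fun y => b y j k) x)
    (hψ : ∀ j, DifferentiableAt ℝ (partialDeriv3 ψ j) x) (j k : Fin n) :
    cjk3 b ψ lam c₀ c₁ t x j k
      = lam * pseudoconvexityMatrix b ψ x j k + lam * (-(4 * c₁) - c₀) * b x j k := by
  have hprod : ∀ j' k', partialDeriv3 (fun y => b y j k * b y j' k' * partialDeriv3 ψ j' y) k' x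
      = b x j k * partialDeriv3 (fun y => b y j' k' * partialDeriv3 ψ j' y) k' x
        + partialDeriv3 (fun y => b y j k) k' x * b x j' k' * partialDeriv3 ψ j' x :=
    fun j' k' => partialDeriv3_mul_mul (hb j k) ((hb j' k').mul (hψ j')) k'
  -- the `b^{jk} (b^{j'k'} ℓ_{x_{j'}})_{x_{k'}}` part of the product rule cancels against `Ψ b^{jk}`
  have hsum : ∑ j', ∑ k', (2 * b x j k' *
        (lam * partialDeriv3 (fun y => b y j' k * partialDeriv3 ψ j' y) k' x)
      - lam * (b x j k * partialDeriv3 (fun y => b y j' k' * partialDeriv3 ψ j' y) k' x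
        + partialDeriv3 (fun y => b y j k) k' x * b x j' k' * partialDeriv3 ψ j' x))
      = lam * pseudoconvexityMatrix b ψ x j k
        - b x j k * ∑ j', ∑ k', lam * partialDeriv3 (fun y => b y j' k' * partialDeriv3 ψ j' y) k' x := by
    simp only [pseudoconvexityMatrix, Finset.mul_sum, ← Finset.sum_sub_distrib]
    exact Finset.sum_congr rfl fun _ _ => Finset.sum_congr rfl fun _ _ => by ring
  simp only [cjk3, Psi3, elltt3_eq, deriv_const_mul_ellt3, partialDeriv3_mul_partialDeriv3_ell3,
    hprod, hsum]
  ring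

end Coefficients

lemma sum_sum_add_mul_mul {ι : Type*} [Fintype ι] (A B : ι → ι → ℝ) (ξ : ι → ℝ) :
    ∑ j, ∑ k, (A j k + B j k) * ξ j * ξ k
      = ∑ j, ∑ k, A j k * ξ j * ξ k + ∑ j, ∑ k, B j k * ξ j * ξ k := by
  simp only [add_mul, Finset.sum_add_distrib]

lemma sum_sum_const_mul_mul_mul {ι : Type*} [Fintype ι] (c : ℝ) (A : ι → ι → ℝ) (ξ : ι → ℝ) :
    ∑ j, ∑ k, c * A j k * ξ j * ξ k = c * ∑ j, ∑ k, A j k * ξ j * ξ k := by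
  simp only [Finset.mul_sum, mul_assoc]

theorem stmt_3_general {n : ℕ} (G : Set (EuclideanSpace ℝ (Fin n)))
    (b : EuclideanSpace ℝ (Fin n) → Fin n → Fin n → ℝ)
    (hbC1 : ∀ j k, ContDiff ℝ 1 (fun x => b x j k))
    (ψ : EuclideanSpace ℝ (Fin n) → ℝ) (hψC2 : ContDiff ℝ 2 ψ)
    (μ₀ : ℝ) (hB1 : CondBi3 b ψ μ₀ (closure G))
    (lam c₀ c₁ : ℝ) (hlam : 0 < lam) :
    ∀ t : ℝ, ∀ x ∈ closure G, ∀ ξ : Fin n → ℝ,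
      lam * (μ₀ - 4 * c₁ - c₀) * ∑ j, ∑ k, b x j k * ξ j * ξ k ≤
        ∑ j, ∑ k, cjk3 b ψ lam c₀ c₁ t x j k * ξ j * ξ k := by
  intro t x hx ξ
  have hb j k : DifferentiableAt ℝ (fun y => b y j k) x :=
    (hbC1 j k).differentiable one_ne_zero x
  have hψ j : DifferentiableAt ℝ (partialDeriv3 ψ j) x :=
    ((hψC2.fderiv_right le_rfl).clm_apply contDiff_const).differentiable one_ne_zero x
  have hcond : μ₀ * ∑ j, ∑ k, b x j k * ξ j * ξ k
      ≤ ∑ j, ∑ k, pseudoconvexityMatrix b ψ x j k * ξ j * ξ k := hB1 x hx ξ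
  simp only [cjk3_eq b ψ hb hψ, sum_sum_add_mul_mul, sum_sum_const_mul_mul_mul]
  linear_combination mul_le_mul_of_nonneg_left hcond hlam.le

/-- the lower bound `Σ c^{jk} ξ_j ξ_k ≥ λ(μ₀ − 4c₁ − c₀) Σ b^{jk} ξ_j ξ_k`
for all `t ∈ ℝ`, `x ∈ closure G` and `ξ ∈ ℝⁿ`. -/
theorem stmt_3 {n : ℕ} (G : Set (EuclideanSpace ℝ (Fin n)))
    (hGopen : IsOpen G) (hGconn : IsConnected G) (hGbdd : Bornology.IsBounded G)
    (b : EuclideanSpace ℝ (Fin n) → Fin n → Fin n → ℝ)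
    (hbC1 : ∀ j k, ContDiff ℝ 1 (fun x => b x j k))
    (hbsymm : ∀ x j k, b x j k = b x k j)
    (ψ : EuclideanSpace ℝ (Fin n) → ℝ) (hψC2 : ContDiff ℝ 2 ψ)
    (μ₀ : ℝ) (hμ₀ : 0 < μ₀) (hB1 : CondBi3 b ψ μ₀ (closure G))
    (lam c₀ c₁ : ℝ) (hlam : 0 < lam) (hc₀ : 0 < c₀) (hc₁ : 0 < c₁) :
    ∀ t : ℝ, ∀ x ∈ closure G, ∀ ξ : Fin n → ℝ,
      lam * (μ₀ - 4 * c₁ - c₀) * ∑ j, ∑ k, b x j k * ξ j * ξ k ≤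
        ∑ j, ∑ k, cjk3 b ψ lam c₀ c₁ t x j k * ξ j * ξ k :=
  stmt_3_general G b hbC1 ψ hψC2 μ₀ hB1 lam c₀ c₁ hlam
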